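/- arXiv:0801.1238 — 2 statements merged into one kernel-verified Lean document; each statement's English description precedes it below -/
import Mathlib

section
/- Let G be a group, Γ₂ = G × Aut(G), with l(g, φ) = φ and u(g, φ) = Ad_g ∘ φ. Define the vertical multiplication: whenever u(g₂, φ₂) = l(g₁, φ₁), i.e. φ₁ = Ad_{g₂} ∘ φ₂, set (g₁, Ad_{g₂} ∘ φ₂) ∘ᵥ (g₂, φ₂) = (g₁ * g₂, φ₂). Then vertical and horizontal multiplication satisfy the interchange law: ((a ∘ᵥ b) ∘ₕ (c ∘ᵥ d)) = ((a ∘ₕ c) ∘ᵥ (b ∘ₕ d)) whenever both sides are defined. -/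
theorem MulAut.conj_mul_apply_mul_self {G : Type*} [Group G] (g : G) (φ : MulAut G) (x : G) :
    (MulAut.conj g * φ) x * g = g * φ x := by
  simp [mul_assoc]

/-- On `Γ₂ = G × Aut G`, with `l (g, φ) = φ`, `u (g, φ) = Ad_g ∘ φ`,
horizontal multiplication `(g₁, φ₁) ∘ₕ (g₂, φ₂) = (g₁ * φ₁ g₂, φ₁ ∘ φ₂)` and vertical
multiplication `(g₁, Ad_{g₂} ∘ φ₂) ∘ᵥ (g₂, φ₂) = (g₁ * g₂, φ₂)` (defined whenever
`l` of the first factor equals `u` of the second), the interchange law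
`(a ∘ᵥ b) ∘ₕ (c ∘ᵥ d) = (a ∘ₕ c) ∘ᵥ (b ∘ₕ d)` holds whenever both sides are defined. -/
theorem interchange_GAutG (G : Type*) [Group G]
    (hmul vmul : (G × MulAut G) → (G × MulAut G) → (G × MulAut G))
    (hhmul : ∀ a b : G × MulAut G, hmul a b = (a.1 * a.2 b.1, a.2 * b.2))
    (hvmul : ∀ a b : G × MulAut G, vmul a b = (a.1 * b.1, b.2)) :
    ∀ a b c d : G × MulAut G,
      -- `a` and `b` are vertically composable: l(a) = u(b)
      a.2 = MulAut.conj b.1 * b.2 →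
      -- `c` and `d` are vertically composable: l(c) = u(d)
      c.2 = MulAut.conj d.1 * d.2 →
      hmul (vmul a b) (vmul c d) = vmul (hmul a c) (hmul b d) := by
  rintro ⟨a, α⟩ ⟨b, β⟩ ⟨c, γ⟩ ⟨d, δ⟩ (hαβ : α = MulAut.conj b * β) -
  simp only [hhmul, hvmul, Prod.mk.injEq, and_true]
  calc a * b * β (c * d)
      = a * (b * β c) * β d := by rw [map_mul]; group
    _ = a * (α c * b) * β d := by rw [hαβ, MulAut.conj_mul_apply_mul_self]
    _ = a * α c * (b * β d) := by group
end

section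
/- Let Γ̃ →^φ Γ ⇉ M be a groupoid G-extension (φ surjective with kernel the bundle of groups M × G). Define the fibered product Γ̃ ×_Γ Γ̃ = {(γ̃₁, γ̃₂) : φ(γ̃₁) = φ(γ̃₂)} with operations: vertical (γ̃₁, γ̃₂) ∘ᵥ (γ̃₂, γ̃₃) = (γ̃₁, γ̃₃), and horizontal (γ̃₁, γ̃₂) ∘ₕ (δ̃₁, δ̃₂) = (γ̃₁ δ̃₁, γ̃₂ δ̃₂). Then the map f : Γ̃ ×_Γ Γ̃ → G ⋉ Aut(G) given by f(γ̃₁, γ̃₂) = (g, AD_{γ̃₂}), where γ̃₁ γ̃₂⁻¹ = i(g at t(γ̃₁)), is compatible with both multiplications: f((γ̃₁,γ̃₂) ∘ₕ (δ̃₁,δ̃₂)) = f(γ̃₁,γ̃₂) ∘ₕ f(δ̃₁,δ̃₂) and f((γ̃₁,γ̃₂) ∘ᵥ (γ̃₂,γ̃₃)) = f(γ̃₁,γ̃₂) ∘ᵥ f(γ̃₂,γ̃₃). -/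
open CategoryTheory

/-!
Every identity is checked after applying the injective `i`, where it becomes an identity of
arrows in `C`: for the horizontal product this is
`(a ≫ c) ≫ (b ≫ d)⁻¹ = (a ≫ b⁻¹) ≫ (b ≫ (c ≫ d⁻¹) ≫ b⁻¹)`, and for the conjugation
formula it is `b = (b ≫ c⁻¹) ≫ c`.
-/

section Extension

variable {C : Type*} [Groupoid C] {G : Type*} [Group G] {i : ∀ m : C, G →* (m ⟶ m)}
  {AD : ∀ {m n : C}, (m ⟶ n) → G → G}

theorem eq_mul_of_eq_comp_inv (hi : ∀ m : C, Function.Injective (i m)) {m n : C}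
    {a b c : m ⟶ n} {g₁ g₂ g : G} (hg₁ : i m g₁ = a ≫ Groupoid.inv b)
    (hg₂ : i m g₂ = b ≫ Groupoid.inv c) (hg : i m g = a ≫ Groupoid.inv c) :
    g = g₁ * g₂ :=
  hi m <| by simp [hg, hg₁, hg₂, Groupoid.vertexGroup_mul]

variable (hi : ∀ m : C, Function.Injective (i m))
  (hAD : ∀ {m n : C} (γ : m ⟶ n) (g : G), i m (AD γ g) = γ ≫ i n g ≫ Groupoid.inv γ)
include hi hAD

theorem ad_comp {k m n : C} (b : k ⟶ m) (d : m ⟶ n) (x : G) :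
    AD (b ≫ d) x = AD b (AD d x) :=
  hi k <| by simp [hAD]

theorem ad_eq_conj_of_eq_comp_inv {m n : C} {b c : m ⟶ n} {g : G}
    (hg : i m g = b ≫ Groupoid.inv c) (x : G) :
    AD b x = g * AD c x * g⁻¹ :=
  hi m <| by
    have hb : b = i m g ≫ c := by simp [hg]
    simp [hAD, hb, Groupoid.vertexGroup_mul, Groupoid.vertexGroup_inv]

theorem eq_mul_ad_of_eq_comp_inv {k m n : C} {a b : k ⟶ m} {c d : m ⟶ n} {g h g'' : G}
    (hg : i k g = a ≫ Groupoid.inv b) (hh : i m h = c ≫ Groupoid.inv d)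
    (hg'' : i k g'' = (a ≫ c) ≫ Groupoid.inv (b ≫ d)) :
    g'' = g * AD b h :=
  hi k <| by simp [hg'', hg, hAD, hh, Groupoid.vertexGroup_mul]

end Extension

theorem extension_fibered_product_map_compatible_general
    {C D : Type*} [Groupoid C] [Groupoid D] (G : Type*) [Group G]
    (φ : C ⥤ D)
    (i : ∀ m : C, G →* (m ⟶ m))
    (hi : ∀ m : C, Function.Injective (i m))
    (AD : ∀ {m n : C}, (m ⟶ n) → G → G)
    (hAD : ∀ {m n : C} (γ : m ⟶ n) (g : G),
      i m (AD γ g) = γ ≫ i n g ≫ Groupoid.inv γ) :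
    -- compatibility with the horizontal multiplication:
    -- `f ((γ̃₁,γ̃₂) ∘ₕ (δ̃₁,δ̃₂)) = f (γ̃₁,γ̃₂) ∘ₕ f (δ̃₁,δ̃₂)`
    (∀ {k m n : C} (a b : k ⟶ m) (c d : m ⟶ n),
      φ.map a = φ.map b → φ.map c = φ.map d →
      ∀ g h g'' : G,
        i k g = a ≫ Groupoid.inv b →
        i m h = c ≫ Groupoid.inv d →
        i k g'' = (a ≫ c) ≫ Groupoid.inv (b ≫ d) →
        g'' = g * AD b h ∧ (∀ x : G, AD (b ≫ d) x = AD b (AD d x))) ∧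
    -- compatibility with the vertical multiplication:
    -- `f ((γ̃₁,γ̃₂) ∘ᵥ (γ̃₂,γ̃₃)) = f (γ̃₁,γ̃₂) ∘ᵥ f (γ̃₂,γ̃₃)`
    (∀ {m n : C} (a b c : m ⟶ n),
      φ.map a = φ.map b → φ.map b = φ.map c →
      ∀ g₁ g₂ g : G,
        i m g₁ = a ≫ Groupoid.inv b →
        i m g₂ = b ≫ Groupoid.inv c →
        i m g = a ≫ Groupoid.inv c →
        g = g₁ * g₂ ∧ (∀ x : G, AD b x = g₂ * AD c x * g₂⁻¹)) :=
  ⟨fun _ _ _ _ _ _ _ _ _ hg hh hg'' =>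
      ⟨eq_mul_ad_of_eq_comp_inv hi hAD hg hh hg'', ad_comp hi hAD _ _⟩,
    fun _ _ _ _ _ _ _ _ hg₁ hg₂ hg =>
      ⟨eq_mul_of_eq_comp_inv hi hg₁ hg₂ hg, ad_eq_conj_of_eq_comp_inv hi hAD hg₂⟩⟩

/-- Let `Γ̃ →^φ Γ ⇉ M` be a groupoid `G`-extension: `φ` is surjective
(full, bijective on objects) and its kernel is the trivial bundle of groups
`M × G`, embedded via fiberwise injective homomorphisms `i m : G →* (m ⟶ m)`;
so for parallel arrows `a b : m ⟶ n` of `Γ̃`, `φ a = φ b` iff `a ≫ b⁻¹ ∈ i(G)`.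
Let `AD_γ̃ ∈ Aut G` be defined by `i (AD_γ̃ g) = γ̃ ≫ i g ≫ γ̃⁻¹`. On the fibered
product `Γ̃ ×_Γ Γ̃ = {(γ̃₁, γ̃₂) : φ γ̃₁ = φ γ̃₂}` with vertical multiplication
`(γ̃₁, γ̃₂) ∘ᵥ (γ̃₂, γ̃₃) = (γ̃₁, γ̃₃)` and horizontal multiplication
`(γ̃₁, γ̃₂) ∘ₕ (δ̃₁, δ̃₂) = (γ̃₁ ≫ δ̃₁, γ̃₂ ≫ δ̃₂)`, the map
`f (γ̃₁, γ̃₂) = (g, AD_{γ̃₂})`, where `i g = γ̃₁ ≫ γ̃₂⁻¹`, is compatible with both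
multiplications of `G ⋉ Aut G`. -/
theorem extension_fibered_product_map_compatible
    {C D : Type*} [Groupoid C] [Groupoid D] (G : Type*) [Group G]
    (φ : C ⥤ D)
    (i : ∀ m : C, G →* (m ⟶ m))
    (hi : ∀ m : C, Function.Injective (i m))
    (hker : ∀ {m n : C} (a b : m ⟶ n),
      φ.map a = φ.map b ↔ ∃ g : G, a = i m g ≫ b)
    (AD : ∀ {m n : C}, (m ⟶ n) → G → G)
    (hAD : ∀ {m n : C} (γ : m ⟶ n) (g : G),
      i m (AD γ g) = γ ≫ i n g ≫ Groupoid.inv γ) :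
    -- compatibility with the horizontal multiplication:
    -- `f ((γ̃₁,γ̃₂) ∘ₕ (δ̃₁,δ̃₂)) = f (γ̃₁,γ̃₂) ∘ₕ f (δ̃₁,δ̃₂)`
    (∀ {k m n : C} (a b : k ⟶ m) (c d : m ⟶ n),
      φ.map a = φ.map b → φ.map c = φ.map d →
      ∀ g h g'' : G,
        i k g = a ≫ Groupoid.inv b →
        i m h = c ≫ Groupoid.inv d →
        i k g'' = (a ≫ c) ≫ Groupoid.inv (b ≫ d) →
        g'' = g * AD b h ∧ (∀ x : G, AD (b ≫ d) x = AD b (AD d x))) ∧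
    -- compatibility with the vertical multiplication:
    -- `f ((γ̃₁,γ̃₂) ∘ᵥ (γ̃₂,γ̃₃)) = f (γ̃₁,γ̃₂) ∘ᵥ f (γ̃₂,γ̃₃)`
    (∀ {m n : C} (a b c : m ⟶ n),
      φ.map a = φ.map b → φ.map b = φ.map c →
      ∀ g₁ g₂ g : G,
        i m g₁ = a ≫ Groupoid.inv b →
        i m g₂ = b ≫ Groupoid.inv c →
        i m g = a ≫ Groupoid.inv c →
        g = g₁ * g₂ ∧ (∀ x : G, AD b x = g₂ * AD c x * g₂⁻¹)) :=
  extension_fibered_product_map_compatible_general G φ i hi AD hAD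
end
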